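/- For e ∈ (-1,1) and γ ∈ ℝ, let A := 1 + (γ/2)(α(1) σ₁⊗σ₃ + α(0) σ₂⊗σ₂) ∈ ℂ^{4×4}, where α(x) := -i (e + i√(1-e²))^{|x|}/√(1-e²) and σ₁, σ₂, σ₃ are the Pauli matrices. Then det(A) = 1 + γ² ((e + i√(1-e²))/(1-e²)) (e - (γ²/4)(e + i√(1-e²))). -/

import Mathlib

open Matrix Kronecker Complex

/-- Pauli matrix σ₁. -/
noncomputable def pauli1 : Matrix (Fin 2) (Fin 2) ℂ := !![0, 1; 1, 0]
/-- Pauli matrix σ₂. -/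
noncomputable def pauli2 : Matrix (Fin 2) (Fin 2) ℂ := !![0, -Complex.I; Complex.I, 0]
/-- Pauli matrix σ₃. -/
noncomputable def pauli3 : Matrix (Fin 2) (Fin 2) ℂ := !![1, 0; 0, -1]

/-- Boundary value resolvent kernel `α(x) = -i (e+i√(1-e²))^{|x|}/√(1-e²)`. -/
noncomputable def alphaBV (e : ℝ) (x : ℤ) : ℂ :=
  -Complex.I * ((e : ℂ) + Complex.I * (Real.sqrt (1 - e ^ 2) : ℝ)) ^ x.natAbs /
    (Real.sqrt (1 - e ^ 2) : ℝ)

/-- The limiting interaction matrix `A_{γ,e-i0}`. -/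
noncomputable def interactionMatrix (γ e : ℝ) : Matrix (Fin 2 × Fin 2) (Fin 2 × Fin 2) ℂ :=
  1 + (γ / 2 : ℂ) • (alphaBV e 1 • (pauli1 ⊗ₖ pauli3) + alphaBV e 0 • (pauli2 ⊗ₖ pauli2))

/-! Splitting the index `(i, k)` by its first component, `A` has the block form `[[1, B], [C, 1]]`
with `2 × 2` blocks `B`, `C`, so `det A = det (1 - C B) = (1 - a² - b²)² - 4a²b²`, where
`a = (γ/2) α(1)` and `b = (γ/2) α(0)`. With `z = e + i√(1-e²)` one has
`a² = -γ² z² / (4(1-e²))`, `b² = -γ² / (4(1-e²))`, and `z² + 1 = 2ez` since `z` is a point of the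
unit circle with real part `e`; this turns `det A` into the stated expression. -/

def sumEquivFinTwoProd (α : Type*) : α ⊕ α ≃ Fin 2 × α :=
  (Equiv.boolProdEquivSum α).symm.trans (finTwoEquiv.symm.prodCongr (Equiv.refl α))

theorem one_add_smul_pauli_kron_submatrix_sumEquivFinTwoProd (a b : ℂ) :
    (1 + a • (pauli1 ⊗ₖ pauli3) + b • (pauli2 ⊗ₖ pauli2)).submatrix
        (sumEquivFinTwoProd _) (sumEquivFinTwoProd _)
      = fromBlocks 1 !![a, -b; b, -a] !![a, b; -b, -a] 1 := by
  ext (i | i) (j | j) <;> fin_cases i <;> fin_cases j <;>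
    simp [sumEquivFinTwoProd, finTwoEquiv, pauli1, pauli2, pauli3, one_apply]

theorem det_one_add_smul_pauli1_kron_pauli3_add_smul_pauli2_kron_pauli2 (a b : ℂ) :
    (1 + a • (pauli1 ⊗ₖ pauli3) + b • (pauli2 ⊗ₖ pauli2)).det
      = (1 - a ^ 2 - b ^ 2) ^ 2 - 4 * a ^ 2 * b ^ 2 := by
  rw [← det_submatrix_equiv_self (sumEquivFinTwoProd _),
    one_add_smul_pauli_kron_submatrix_sumEquivFinTwoProd, det_fromBlocks_one₁₁]
  simp only [one_fin_two, mul_fin_two, of_sub_of, det_fin_two, of_apply, Pi.sub_apply,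
    cons_val_zero, cons_val_one, cons_val_fin_one]
  ring

theorem ofReal_sqrt_one_sub_sq_sq {e : ℝ} (he : e ^ 2 ≤ 1) :
    ((Real.sqrt (1 - e ^ 2) : ℝ) : ℂ) ^ 2 = 1 - (e : ℂ) ^ 2 := by
  exact_mod_cast Real.sq_sqrt (sub_nonneg.2 he)

theorem alphaBV_sq {e : ℝ} (he : e ^ 2 ≤ 1) (x : ℤ) :
    alphaBV e x ^ 2
      = -(((e : ℂ) + I * (Real.sqrt (1 - e ^ 2) : ℝ)) ^ x.natAbs) ^ 2 / (1 - (e : ℂ) ^ 2) := by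
  rw [alphaBV, div_pow, mul_pow, neg_pow_two, I_sq, ofReal_sqrt_one_sub_sq_sq he]
  ring

theorem sq_add_one_eq_two_mul {e : ℝ} (he : e ^ 2 ≤ 1) :
    ((e : ℂ) + I * (Real.sqrt (1 - e ^ 2) : ℝ)) ^ 2 + 1
      = 2 * e * ((e : ℂ) + I * (Real.sqrt (1 - e ^ 2) : ℝ)) := by
  linear_combination (((Real.sqrt (1 - e ^ 2) : ℝ) : ℂ) ^ 2 * I_sq - ofReal_sqrt_one_sub_sq_sq he)

theorem det_interactionMatrix (γ e : ℝ) (he : e ∈ Set.Ioo (-1 : ℝ) 1) :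
    (interactionMatrix γ e).det
      = 1 + (γ : ℂ) ^ 2 * (((e : ℂ) + Complex.I * (Real.sqrt (1 - e ^ 2) : ℝ)) / ((1 : ℂ) - (e : ℂ) ^ 2)) *
          ((e : ℂ) - (γ : ℂ) ^ 2 / 4 * ((e : ℂ) + Complex.I * (Real.sqrt (1 - e ^ 2) : ℝ))) := by
  have he2 : e ^ 2 < 1 := by nlinarith [he.1, he.2]
  have hne : (1 : ℂ) - (e : ℂ) ^ 2 ≠ 0 := by exact_mod_cast (sub_pos.2 he2).ne'
  rw [interactionMatrix, smul_add, smul_smul, smul_smul, ← add_assoc,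
    det_one_add_smul_pauli1_kron_pauli3_add_smul_pauli2_kron_pauli2, mul_pow, mul_pow,
    alphaBV_sq he2.le, alphaBV_sq he2.le, Int.natAbs_one, Int.natAbs_zero, pow_one, pow_zero]
  have hz := sq_add_one_eq_two_mul he2.le
  generalize (e : ℂ) + I * (Real.sqrt (1 - e ^ 2) : ℝ) = z at hz ⊢
  field_simp
  -- `(z² + 1)² - 4e²z²` is divisible by `z² + 1 - 2ez`
  linear_combination (32 * (1 - (e : ℂ) ^ 2) * γ ^ 2 + 4 * γ ^ 4 * (z ^ 2 + 1 + 2 * e * z)) * hz
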